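/- arXiv:2405.01184 — 3 statements merged into one kernel-verified Lean document; each statement's English description precedes it below -/
import Mathlib

section
/- For every τ in the upper half plane, the modular discriminant satisfies |Δ(τ)| ≤ e^{-2π Im(τ)} (1 + 2 e^{-2π Im(τ)} + 2 e^{-8π Im(τ)}/(1 - e^{-4π Im(τ)}))^{24}. -/
open Complex Real

/-- The modular discriminant, via its product formula `Δ(τ) = q ∏ (1 - qⁿ)²⁴`, `q = e^{2πiτ}`. -/
noncomputable def Δ (τ : ℂ) : ℂ :=
  Complex.exp (2 * π * I * τ) * ∏' n : ℕ, (1 - Complex.exp (2 * π * I * τ) ^ (n + 1)) ^ 24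

/-!
Euler's pentagonal number theorem writes `∏ (1 - xⁿ⁺¹)` as `∑ₖ (-1)ᵏ (x^{p(-k)} - x^{p(k+1)})`,
`p(k) = k(3k-1)/2`, i.e. as an alternating series over the exponents `0, 1, 2, 5, 7, 12, 15, …`.
Mathlib proves it in any topological ring modulo convergence hypotheses; for `‖x‖ = r < 1` in a
complete normed ring these follow by comparison with the geometric series, the finite products
`∏ (1 - xᵐ)` being bounded by `exp (1 / (1 - r))`. Bounding the `k`-th pair of exponents by
`(2k, 2k + 2)` for `k ≥ 1` gives `‖∏ (1 - xⁿ⁺¹)‖ ≤ 1 + r + (r² + r⁴) / (1 - r²)`, which is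
`1 + r + r² + 2r⁴ / (1 - r²) ≤ 1 + 2r + 2r⁴ / (1 - r²)`. Finally `|Δ(τ)| = r ‖∏ (1 - qⁿ)‖²⁴`
for `r = |q| = e^{-2π Im τ}`.
-/

open Finset

lemma norm_neg_one_pow_mul_sub_le {R : Type*} [SeminormedRing R] (k : ℕ) (a b : R) :
    ‖(-1) ^ k * (a - b)‖ ≤ ‖a‖ + ‖b‖ := by
  rcases neg_one_pow_eq_or R k with h | h <;>
    simpa only [h, one_mul, neg_one_mul, norm_neg] using norm_sub_le a b

lemma two_mul_le_pentagonal_neg (k : ℕ) : 2 * k ≤ pentagonal (-k) := by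
  have := two_mul_natCast_pentagonal_neg k
  zify
  nlinarith

lemma two_mul_add_four_le_pentagonal_add_two (k : ℕ) : 2 * k + 4 ≤ pentagonal (k + 2) := by
  have := two_mul_natCast_pentagonal (k + 2)
  zify
  nlinarith

lemma le_pentagonal_add_one (k : ℕ) : k ≤ pentagonal (k + 1) := by
  have := two_mul_natCast_pentagonal (k + 1)
  zify
  nlinarith

section Pentagonal

variable {R : Type*} [NormedCommRing R] [NormOneClass R] {x : R}

lemma norm_prod_range_one_sub_pow_le (hx : ‖x‖ < 1) (k n : ℕ) :
    ‖∏ i ∈ range n, (1 - x ^ (k + i + 1))‖ ≤ Real.exp (1 - ‖x‖)⁻¹ := by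
  have hr := norm_nonneg x
  calc ‖∏ i ∈ range n, (1 - x ^ (k + i + 1))‖
      ≤ ∏ i ∈ range n, (1 + ‖x‖ ^ (k + i + 1)) := by
        refine (Finset.norm_prod_le _ _).trans
          (prod_le_prod (fun _ _ ↦ norm_nonneg _) fun i _ ↦ ?_)
        grw [norm_sub_le, norm_one, norm_pow_le]
    _ ≤ Real.exp (∑ i ∈ range n, ‖x‖ ^ (k + i + 1)) :=
        Real.prod_one_add_le_exp_sum _ fun _ ↦ by positivity
    _ ≤ Real.exp (1 - ‖x‖)⁻¹ := by
        rw [Real.exp_le_exp, ← tsum_geometric_of_lt_one hr hx]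
        refine (sum_le_sum fun i _ ↦
          pow_le_pow_of_le_one hr hx.le (by omega : i ≤ k + i + 1)).trans ?_
        exact (summable_geometric_of_lt_one hr hx).sum_le_tsum _ fun _ _ ↦ by positivity

lemma norm_pow_mul_prod_one_sub_pow_le (hx : ‖x‖ < 1) (k n : ℕ) :
    ‖x ^ ((k + 1) * n) * ∏ i ∈ range (n + 1), (1 - x ^ (k + i + 1))‖ ≤
      Real.exp (1 - ‖x‖)⁻¹ * ‖x‖ ^ n := by
  have hr := norm_nonneg x
  have hpow : ‖x‖ ^ ((k + 1) * n) ≤ ‖x‖ ^ n :=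
    pow_le_pow_of_le_one hr hx.le (Nat.le_mul_of_pos_left n k.succ_pos)
  grw [norm_mul_le, norm_prod_range_one_sub_pow_le hx, norm_pow_le, hpow, mul_comm]

lemma summable_pow_mul_prod_one_sub_pow [CompleteSpace R] (hx : ‖x‖ < 1) (k : ℕ) :
    Summable fun n ↦ x ^ ((k + 1) * n) * ∏ i ∈ range (n + 1), (1 - x ^ (k + i + 1)) :=
  .of_norm_bounded ((summable_geometric_of_lt_one (norm_nonneg x) hx).mul_left _)
    (norm_pow_mul_prod_one_sub_pow_le hx k)

lemma norm_tsum_pow_mul_prod_one_sub_pow_le (hx : ‖x‖ < 1) (k : ℕ) :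
    ‖∑' n, x ^ ((k + 1) * n) * ∏ i ∈ range (n + 1), (1 - x ^ (k + i + 1))‖ ≤
      Real.exp (1 - ‖x‖)⁻¹ * (1 - ‖x‖)⁻¹ :=
  tsum_of_norm_bounded ((hasSum_geometric_of_lt_one (norm_nonneg x) hx).mul_left _)
    (norm_pow_mul_prod_one_sub_pow_le hx k)

lemma multipliable_one_sub_pow_add [CompleteSpace R] (hx : ‖x‖ < 1) (k : ℕ) :
    Multipliable fun n ↦ 1 - x ^ (n + k + 1) := by
  simp_rw [sub_eq_add_neg]
  refine multipliable_one_add_of_summable <|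
    ((summable_geometric_of_lt_one (norm_nonneg x) hx).comp_injective
      (add_left_injective (k + 1))).of_nonneg_of_le (fun _ ↦ norm_nonneg _) fun n ↦ ?_
  simpa [add_assoc] using norm_pow_le x (n + k + 1)

lemma summable_pentagonal_series [CompleteSpace R] (hx : ‖x‖ < 1) :
    Summable fun k : ℕ ↦ (-1) ^ k * (x ^ pentagonal (-k) - x ^ pentagonal (k + 1)) := by
  have hr := norm_nonneg x
  refine .of_norm_bounded ((summable_geometric_of_lt_one hr hx).mul_left 2) fun k ↦ ?_
  grw [norm_neg_one_pow_mul_sub_le, norm_pow_le, norm_pow_le,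
    pow_le_pow_of_le_one hr hx.le ((by omega : k ≤ 2 * k).trans (two_mul_le_pentagonal_neg k)),
    pow_le_pow_of_le_one hr hx.le (le_pentagonal_add_one k)]
  exact (two_mul _).ge

theorem tprod_one_sub_pow_eq_tsum_pentagonal [CompleteSpace R] (hx : ‖x‖ < 1) :
    ∏' n, (1 - x ^ (n + 1)) =
      ∑' k : ℕ, (-1) ^ k * (x ^ pentagonal (-k) - x ^ pentagonal (k + 1)) := by
  have hr := norm_nonneg x
  refine Pentagonal.tprod_one_sub_pow (tendsto_pow_atTop_nhds_zero_of_norm_lt_one hx)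
    (summable_pow_mul_prod_one_sub_pow hx) (multipliable_one_sub_pow_add hx) ?_ ?_
  · exact summable_pentagonal_series hx
  · refine squeeze_zero_norm (a := fun k ↦ Real.exp (1 - ‖x‖)⁻¹ * (1 - ‖x‖)⁻¹ * ‖x‖ ^ k)
      (fun k ↦ ?_) ?_
    · have hk : k ≤ (k + 1) * (3 * k + 4) / 2 := by
        rw [Nat.le_div_iff_mul_le two_pos]
        nlinarith
      grw [norm_mul_le, norm_mul_le, norm_pow_le, norm_pow_le, norm_neg, norm_one, one_pow,
        one_mul, norm_tsum_pow_mul_prod_one_sub_pow_le hx, pow_le_pow_of_le_one hr hx.le hk,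
        mul_comm]
      have : 0 < 1 - ‖x‖ := by linarith
      positivity
    · simpa using (tendsto_pow_atTop_nhds_zero_of_lt_one hr hx).const_mul _

theorem norm_tprod_one_sub_pow_le [CompleteSpace R] (hx : ‖x‖ < 1) :
    ‖∏' n, (1 - x ^ (n + 1))‖ ≤ 1 + 2 * ‖x‖ + 2 * ‖x‖ ^ 4 / (1 - ‖x‖ ^ 2) := by
  set r := ‖x‖
  have hr : 0 ≤ r := norm_nonneg x
  have hr2 : r ^ 2 < 1 := by nlinarith
  have hhead :
      ‖(-1) ^ 0 * (x ^ pentagonal (-(0 : ℕ)) - x ^ pentagonal ((0 : ℕ) + 1))‖ ≤ 1 + r := by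
    simpa [pentagonal_def] using norm_sub_le (1 : R) x
  have htail : ∀ k : ℕ, ‖(-1) ^ (k + 1) *
      (x ^ pentagonal (-(k + 1 : ℕ)) - x ^ pentagonal ((k + 1 : ℕ) + 1))‖ ≤
      (r ^ 2 + r ^ 4) * (r ^ 2) ^ k := by
    intro k
    have hcast : ((k + 1 : ℕ) : ℤ) + 1 = k + 2 := by push_cast; ring
    rw [hcast]
    grw [norm_neg_one_pow_mul_sub_le, norm_pow_le, norm_pow_le,
      pow_le_pow_of_le_one hr hx.le (two_mul_le_pentagonal_neg (k + 1)),
      pow_le_pow_of_le_one hr hx.le (two_mul_add_four_le_pentagonal_add_two k)]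
    exact (by ring : r ^ (2 * (k + 1)) + r ^ (2 * k + 4) = _).le
  have htail_sum := (hasSum_geometric_of_lt_one (by positivity) hr2).mul_left (r ^ 2 + r ^ 4)
  rw [tprod_one_sub_pow_eq_tsum_pentagonal hx, (summable_pentagonal_series hx).tsum_eq_zero_add]
  calc _ ≤ (1 + r) + (r ^ 2 + r ^ 4) * (1 - r ^ 2)⁻¹ :=
        (norm_add_le _ _).trans (add_le_add hhead (tsum_of_norm_bounded htail_sum htail))
    _ = 1 + r + r ^ 2 + 2 * r ^ 4 / (1 - r ^ 2) := by
        field_simp [(sub_pos.2 hr2).ne']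
        ring
    _ ≤ 1 + 2 * r + 2 * r ^ 4 / (1 - r ^ 2) := by nlinarith

end Pentagonal

lemma norm_exp_two_pi_I_mul (τ : ℂ) : ‖cexp (2 * π * I * τ)‖ = Real.exp (-(2 * π * τ.im)) := by
  simp [Complex.norm_exp, Complex.mul_re]

theorem delta_upper_bound (τ : ℂ) (hτ : 0 < τ.im) :
    ‖Δ τ‖ ≤ Real.exp (-(2 * π * τ.im)) *
      (1 + 2 * Real.exp (-(2 * π * τ.im)) +
        2 * Real.exp (-(8 * π * τ.im)) / (1 - Real.exp (-(4 * π * τ.im)))) ^ 24 := by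
  set q := cexp (2 * π * I * τ)
  have hq : ‖q‖ = Real.exp (-(2 * π * τ.im)) := norm_exp_two_pi_I_mul τ
  have hq1 : ‖q‖ < 1 := by
    rw [hq, Real.exp_lt_one_iff, neg_lt_zero]
    positivity
  have h4 : Real.exp (-(8 * π * τ.im)) = ‖q‖ ^ 4 := by
    rw [hq, ← Real.exp_nat_mul]
    ring_nf
  have h2 : Real.exp (-(4 * π * τ.im)) = ‖q‖ ^ 2 := by
    rw [hq, ← Real.exp_nat_mul]
    ring_nf
  rw [Δ, (ModularForm.multipliable_one_sub_pow hq1).tprod_pow, norm_mul, norm_pow, ← hq, h4, h2]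
  gcongr
  exact norm_tprod_one_sub_pow_le hq1
end

section
/- For every τ in the upper half plane with e^{-2π Im(τ)} ≤ 1/3, the modular discriminant satisfies |Δ(τ)| ≥ e^{-2π Im(τ)} (1 - e^{-2π Im(τ)} - e^{-4π Im(τ)} - 2 e^{-4π Im(τ)}/(1 - e^{-2π Im(τ)}))^{24}. -/
/-!
With `q = e^{2πiτ}` and `r = |q| = e^{-2π Im τ}`, the reverse triangle inequality and the
Weierstrass product inequality `∏ (1 - aₙ) ≥ 1 - ∑ aₙ` (for `0 ≤ aₙ ≤ 1`) give
`|∏ (1 - qⁿ)| ≥ ∏ (1 - rⁿ) ≥ 1 - r / (1 - r)`. This dominates the bracket of the statement,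
which is nonnegative once `r ≤ 1/3`.
-/

open Complex Real

theorem Finset.one_sub_sum_le_prod_one_sub {ι R : Type*} [CommRing R] [LinearOrder R]
    [IsStrictOrderedRing R] (s : Finset ι) {f : ι → R} (h0 : ∀ i ∈ s, 0 ≤ f i)
    (h1 : ∀ i ∈ s, f i ≤ 1) : 1 - ∑ i ∈ s, f i ≤ ∏ i ∈ s, (1 - f i) := by
  classical
  induction s using Finset.induction_on with
  | empty => simp
  | insert a s ha ih =>
    rw [Finset.sum_insert ha, Finset.prod_insert ha]
    have h0a := h0 a (mem_insert_self a s)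
    have h1a := h1 a (mem_insert_self a s)
    have ih := ih (fun i hi ↦ h0 i (mem_insert_of_mem hi)) (fun i hi ↦ h1 i (mem_insert_of_mem hi))
    have hsum : 0 ≤ ∑ i ∈ s, f i := sum_nonneg fun i hi ↦ h0 i (mem_insert_of_mem hi)
    nlinarith [mul_le_mul_of_nonneg_left ih (sub_nonneg.2 h1a)]

theorem one_sub_le_norm_tprod_one_sub {ι E : Type*} [NormedCommRing E] [NormMulClass E]
    [NormOneClass E] [CompleteSpace E] {f : ι → E} {S : ℝ} (hS : HasSum (‖f ·‖) S)
    (hf : ∀ i, ‖f i‖ ≤ 1) : 1 - S ≤ ‖∏' i, (1 - f i)‖ := by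
  have hmult : Multipliable fun i ↦ 1 - f i := by
    simpa [sub_eq_add_neg] using
      multipliable_one_add_of_summable (f := fun i ↦ -f i) (by simpa using hS.summable)
  refine le_hasProd_of_le_prod hmult.hasProd.norm fun s ↦ ?_
  calc 1 - S ≤ 1 - ∑ i ∈ s, ‖f i‖ := by
        gcongr; exact sum_le_hasSum s (fun _ _ ↦ norm_nonneg _) hS
    _ ≤ ∏ i ∈ s, (1 - ‖f i‖) :=
        s.one_sub_sum_le_prod_one_sub (fun _ _ ↦ norm_nonneg _) fun i _ ↦ hf i
    _ ≤ ∏ i ∈ s, ‖1 - f i‖ :=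
        Finset.prod_le_prod (fun i _ ↦ sub_nonneg.2 (hf i)) fun i _ ↦ by
          simpa using norm_sub_norm_le 1 (f i)

theorem one_sub_div_le_norm_tprod_one_sub_pow {E : Type*} [NormedCommRing E] [NormMulClass E]
    [NormOneClass E] [CompleteSpace E] {q : E} (hq : ‖q‖ < 1) :
    1 - ‖q‖ / (1 - ‖q‖) ≤ ‖∏' n : ℕ, (1 - q ^ (n + 1))‖ := by
  have hS : HasSum (fun n : ℕ ↦ ‖q ^ (n + 1)‖) (‖q‖ / (1 - ‖q‖)) := by
    simpa [pow_succ', div_eq_mul_inv] using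
      (hasSum_geometric_of_lt_one (norm_nonneg q) hq).mul_left ‖q‖
  exact one_sub_le_norm_tprod_one_sub hS fun n ↦
    (norm_pow q (n + 1)).trans_le (pow_le_one₀ (norm_nonneg q) hq.le)

theorem delta_lower_bound_general (τ : ℂ)
    (hsmall : Real.exp (-(2 * π * τ.im)) ≤ 1 / 3) :
    Real.exp (-(2 * π * τ.im)) *
      (1 - Real.exp (-(2 * π * τ.im)) - Real.exp (-(4 * π * τ.im)) -
        2 * Real.exp (-(4 * π * τ.im)) / (1 - Real.exp (-(2 * π * τ.im)))) ^ 24 ≤ ‖Δ τ‖ := by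
  set r := Real.exp (-(2 * π * τ.im))
  set q := Complex.exp (2 * π * I * τ)
  have hq : ‖q‖ = r := by simp [q, r, Complex.norm_exp]
  have hr4 : Real.exp (-(4 * π * τ.im)) = r ^ 2 := by
    rw [← Real.exp_nat_mul]; ring_nf
  have hr0 : 0 < r := Real.exp_pos _
  have hr1 : 0 < 1 - r := by linarith
  have hq1 : ‖q‖ < 1 := by linarith
  have hΔ : Δ τ = q * (∏' n : ℕ, (1 - q ^ (n + 1))) ^ 24 := by
    rw [← (ModularForm.multipliable_one_sub_pow hq1).tprod_pow]; rfl
  have hnonneg : 0 ≤ 1 - r - r ^ 2 - 2 * r ^ 2 / (1 - r) := by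
    rw [sub_nonneg, div_le_iff₀ hr1]; nlinarith
  have hbound : 1 - r - r ^ 2 - 2 * r ^ 2 / (1 - r) ≤ 1 - r / (1 - r) := by
    rw [show r / (1 - r) = r + r ^ 2 / (1 - r) by field_simp; ring, mul_div_assoc]
    nlinarith [show 0 ≤ r ^ 2 / (1 - r) by positivity]
  have hprod := one_sub_div_le_norm_tprod_one_sub_pow hq1
  rw [hq] at hprod
  rw [hΔ, norm_mul, norm_pow, hq, hr4]
  exact mul_le_mul_of_nonneg_left (pow_le_pow_left₀ hnonneg (hbound.trans hprod) 24) hr0.le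

theorem delta_lower_bound (τ : ℂ) (hτ : 0 < τ.im)
    (hsmall : Real.exp (-(2 * π * τ.im)) ≤ 1 / 3) :
    Real.exp (-(2 * π * τ.im)) *
      (1 - Real.exp (-(2 * π * τ.im)) - Real.exp (-(4 * π * τ.im)) -
        2 * Real.exp (-(4 * π * τ.im)) / (1 - Real.exp (-(2 * π * τ.im)))) ^ 24 ≤ ‖Δ τ‖ :=
  delta_lower_bound_general τ hsmall
end

section
/- Let z = e^{iθ} with θ ∈ [π/2, 2π/3]. If τ in the upper half plane is PSL₂(ℤ)-equivalent to z, lies in the strip |Re(τ)| ≤ 1/2, has Im(τ) > 2/5, and τ ∉ {z, -1/z, -1/(z+1), z/(z+1), -1/(z-1), -z/(z-1)}, then τ does not exist; i.e., the only points of the orbit of z in the region {|Re τ| ≤ 1/2, Im τ > 2/5} are among those six points. -/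
open Complex Real

/-! Write `z = e^{iθ}`, so `|z| = 1` and `-1/2 ≤ Re z ≤ 0`. Since `Im τ = Im z / |cz + d|²` and
`Im z ≤ 1`, the bound `Im τ > 2/5` forces `|cz + d|² < 5/2`. On the arc
`|cz + d|² = c² + 2cd Re z + d²` is symmetric in `c, d` and at least `3c²/4`, so `|c|, |d| ≤ 1`.
Hence `τ` is `z + n` (if `c = 0`) or `n - 1/(z + e)` with `e ∈ {-1, 0, 1}`, and since
`Re (1/z) = Re z` and `Re (1/(z ± 1)) = ±1/2`, the strip `|Re τ| ≤ 1/2` leaves two values of `n` in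
each case. They give the six listed points; the values `z + 1` and `-1 - 1/z` occur only when
`Re z = -1/2`, where `z + 1 = -1/z`. -/

lemma im_mobius (a b c d : ℝ) (z : ℂ) :
    ((a * z + b) / (c * z + d)).im = (a * d - b * c) * z.im / normSq (c * z + d) := by
  rw [div_im, div_sub_div_same]
  congr 1
  simp only [add_im, mul_im, ofReal_re, ofReal_im, zero_mul, add_zero, add_re, mul_re, sub_zero]
  ring

lemma normSq_lt_of_lt_im_mobius {a b c d : ℤ} (hdet : a * d - b * c = 1) {z : ℂ}
    (hy : z.im ≤ 1) (h : 2 / 5 < ((a * z + b) / (c * z + d)).im) :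
    normSq (c * z + d) < 5 / 2 := by
  have him := im_mobius a b c d z
  have hdet' : (a * d - b * c : ℝ) = 1 := by exact_mod_cast hdet
  push_cast at him
  rw [him, hdet', one_mul] at h
  have hN : 0 < normSq (c * z + d) := by
    refine (normSq_nonneg _).lt_of_ne fun h0 => ?_
    rw [← h0, div_zero] at h
    norm_num at h
  rw [lt_div_iff₀ hN] at h
  linarith

lemma normSq_mul_add_comm {z : ℂ} (hz : normSq z = 1) (c d : ℝ) :
    normSq (c * z + d) = normSq (d * z + c) := by
  simp only [normSq_apply, add_re, mul_re, ofReal_re, ofReal_im, zero_mul, sub_zero, add_im,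
    mul_im, add_zero] at hz ⊢
  linear_combination (c ^ 2 - d ^ 2) * hz

lemma three_quarters_mul_sq_le_normSq {z : ℂ} (hz : normSq z = 1) (hre : |z.re| ≤ 1 / 2)
    (c d : ℝ) : 3 / 4 * c ^ 2 ≤ normSq (c * z + d) := by
  rw [normSq_apply] at hz
  have him : 3 / 4 ≤ z.im ^ 2 := by nlinarith [abs_le.mp hre]
  simp only [normSq_apply, add_re, mul_re, ofReal_re, ofReal_im, zero_mul, sub_zero, add_im,
    mul_im, add_zero]
  nlinarith [sq_nonneg (c * z.re + d), mul_le_mul_of_nonneg_left him (sq_nonneg c)]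

lemma abs_le_one_of_normSq_lt {z : ℂ} (hz : normSq z = 1) (hre : |z.re| ≤ 1 / 2) {c d : ℤ}
    (h : normSq (c * z + d) < 5 / 2) : |c| ≤ 1 := by
  have hc := three_quarters_mul_sq_le_normSq hz hre c d
  push_cast at hc
  have : c ^ 2 < 4 := by exact_mod_cast (by linarith : (c : ℝ) ^ 2 < 4)
  nlinarith [sq_abs c]

lemma mobius_eq_add_int {a b c d : ℤ} (hdet : a * d - b * c = 1) (hc : c = 0) (z : ℂ) :
    (a * z + b) / (c * z + d) = z + (b * d : ℤ) := by
  subst hc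
  obtain ⟨rfl, rfl⟩ | ⟨rfl, rfl⟩ := Int.eq_one_or_neg_one_of_mul_eq_one' (by simpa using hdet)
  all_goals push_cast; field_simp; ring

lemma mobius_eq_int_sub_inv {a b c d : ℤ} (hdet : a * d - b * c = 1) (hc : IsUnit c) {z : ℂ}
    (hz : z.im ≠ 0) : (a * z + b) / (c * z + d) = (a * c : ℤ) - 1 / (z + (c * d : ℤ)) := by
  have hne : ∀ r : ℝ, z + r ≠ 0 := fun r h => hz (by simpa using congrArg im h)
  rcases Int.isUnit_iff.mp hc with rfl | rfl
  · obtain rfl : b = a * d - 1 := by linarith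
    have := hne d
    push_cast at this ⊢
    field_simp
    ring
  · obtain rfl : b = 1 - a * d := by linarith
    have := hne (-d)
    push_cast at this ⊢
    have : -z + d ≠ 0 := fun h => this (by linear_combination -h)
    field_simp
    ring

lemma mobius_eq_of_normSq_lt {a b c d : ℤ} (hdet : a * d - b * c = 1) {z : ℂ}
    (hz : normSq z = 1) (hre : |z.re| ≤ 1 / 2) (him : z.im ≠ 0)
    (hN : normSq (c * z + d) < 5 / 2) :
    ∃ n : ℤ, (a * z + b) / (c * z + d) = z + n ∨ (a * z + b) / (c * z + d) = n - 1 / (z - 1) ∨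
      (a * z + b) / (c * z + d) = n - 1 / z ∨ (a * z + b) / (c * z + d) = n - 1 / (z + 1) := by
  have hc := abs_le.mp (abs_le_one_of_normSq_lt hz hre hN)
  have hd := abs_le.mp (abs_le_one_of_normSq_lt hz hre (c := d) (d := c) (by
    have := normSq_mul_add_comm hz c d; push_cast at this; rwa [← this]))
  obtain hc0 | hcu : c = 0 ∨ IsUnit c := by rw [Int.isUnit_iff]; omega
  · exact ⟨b * d, Or.inl (mobius_eq_add_int hdet hc0 z)⟩
  · refine ⟨a * c, Or.inr ?_⟩
    rw [mobius_eq_int_sub_inv hdet hcu him]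
    obtain h | h | h : c * d = -1 ∨ c * d = 0 ∨ c * d = 1 := by
      rcases Int.isUnit_iff.mp hcu with rfl | rfl <;> omega
    all_goals simp only [h, Int.cast_neg, Int.cast_one, Int.cast_zero, add_zero, ← sub_eq_add_neg]
    all_goals simp only [true_or, or_true]

lemma add_one_eq_neg_inv {z : ℂ} (hz : normSq z = 1) (hre : z.re = -1 / 2) : z + 1 = -z⁻¹ := by
  rw [inv_def, hz]
  apply Complex.ext <;> simp [hre]
  norm_num

lemma inv_add_one_re {z : ℂ} (hz : normSq z = 1) (him : z.im ≠ 0) : (z + 1)⁻¹.re = 1 / 2 := by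
  rw [inv_re, normSq_apply]
  rw [normSq_apply] at hz
  have : z.re + 1 ≠ 0 := fun h => him (by nlinarith)
  simp only [add_re, one_re, add_im, one_im, add_zero, one_div]
  field_simp
  linear_combination (-1) * hz

lemma inv_sub_one_re {z : ℂ} (hz : normSq z = 1) (him : z.im ≠ 0) : (z - 1)⁻¹.re = -1 / 2 := by
  rw [inv_re, normSq_apply]
  rw [normSq_apply] at hz
  have : z.re - 1 ≠ 0 := fun h => him (by nlinarith)
  simp only [sub_re, one_re, sub_im, one_im, sub_zero]
  field_simp
  linear_combination hz

lemma Int.eq_or_eq_add_one_of_sub_one_lt_of_lt_add_two {m n : ℤ} (h₁ : (m : ℝ) - 1 < n)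
    (h₂ : (n : ℝ) < m + 2) : n = m ∨ n = m + 1 := by
  have : m - 1 < n := by exact_mod_cast h₁
  have : n < m + 2 := by exact_mod_cast h₂
  omega

section StripPoints

variable {z τ : ℂ} {n : ℤ}

lemma eq_or_eq_neg_inv_of_eq_add_int (hz : normSq z = 1) (hre : -1 / 2 ≤ z.re)
    (hre' : z.re ≤ 0) (hτ : τ = z + n) (hstrip : |τ.re| ≤ 1 / 2) : τ = z ∨ τ = -1 / z := by
  subst hτ
  rw [add_re, intCast_re, abs_le] at hstrip
  obtain rfl | rfl := Int.eq_or_eq_add_one_of_sub_one_lt_of_lt_add_two (m := 0) (n := n)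
    (by push_cast; linarith) (by push_cast; linarith)
  · simp
  · right
    push_cast
    rw [add_one_eq_neg_inv hz (by push_cast at hstrip; linarith), neg_div, one_div]

lemma eq_or_eq_neg_inv_of_eq_int_sub_inv (hz : normSq z = 1) (hre : -1 / 2 ≤ z.re)
    (hre' : z.re ≤ 0) (hτ : τ = n - 1 / z) (hstrip : |τ.re| ≤ 1 / 2) : τ = z ∨ τ = -1 / z := by
  subst hτ
  rw [sub_re, intCast_re, one_div, inv_re, hz, div_one, abs_le] at hstrip
  obtain rfl | rfl := Int.eq_or_eq_add_one_of_sub_one_lt_of_lt_add_two (m := -1) (n := n)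
    (by push_cast; linarith) (by push_cast; linarith)
  · left
    have := add_one_eq_neg_inv hz (by push_cast at hstrip; linarith)
    push_cast
    linear_combination -this
  · right
    push_cast
    ring

lemma eq_or_eq_of_eq_int_sub_inv_add_one (hz : normSq z = 1) (him : z.im ≠ 0)
    (hτ : τ = n - 1 / (z + 1)) (hstrip : |τ.re| ≤ 1 / 2) :
    τ = -1 / (z + 1) ∨ τ = z / (z + 1) := by
  subst hτ
  rw [sub_re, intCast_re, one_div, inv_add_one_re hz him, abs_le] at hstrip
  have hz1 : z + 1 ≠ 0 := fun h => him (by simpa using congrArg im h)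
  obtain rfl | rfl := Int.eq_or_eq_add_one_of_sub_one_lt_of_lt_add_two (m := 0) (n := n)
    (by push_cast; linarith) (by push_cast; linarith)
  · left
    push_cast
    ring
  · right
    push_cast
    field_simp
    ring

lemma eq_or_eq_of_eq_int_sub_inv_sub_one (hz : normSq z = 1) (him : z.im ≠ 0)
    (hτ : τ = n - 1 / (z - 1)) (hstrip : |τ.re| ≤ 1 / 2) :
    τ = -1 / (z - 1) ∨ τ = -z / (z - 1) := by
  subst hτ
  rw [sub_re, intCast_re, one_div, inv_sub_one_re hz him, abs_le] at hstrip
  have hz1 : z - 1 ≠ 0 := fun h => him (by simpa using congrArg im h)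
  obtain rfl | rfl := Int.eq_or_eq_add_one_of_sub_one_lt_of_lt_add_two (m := -1) (n := n)
    (by push_cast; linarith) (by push_cast; linarith)
  · right
    push_cast
    field_simp
    ring
  · left
    push_cast
    ring

end StripPoints

lemma Real.cos_mem_Icc_of_mem_Icc {θ : ℝ} (hθ : θ ∈ Set.Icc (π / 2) (2 * π / 3)) :
    cos θ ∈ Set.Icc (-1 / 2) 0 := by
  have hcos : cos (2 * π / 3) = -1 / 2 := by
    rw [show 2 * π / 3 = π - π / 3 by ring, cos_pi_sub, cos_pi_div_three]; norm_num
  have hπ := pi_pos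
  obtain ⟨hθ₁, hθ₂⟩ := hθ
  constructor
  · rw [← hcos]
    exact antitoneOn_cos ⟨by linarith, by linarith⟩ ⟨by linarith, by linarith⟩ hθ₂
  · rw [← cos_pi_div_two]
    exact antitoneOn_cos ⟨by linarith, by linarith⟩ ⟨by linarith, by linarith⟩ hθ₁

/-- The only points of the `PSL₂(ℤ)`-orbit of `z = e^{iθ}`, `θ ∈ [π/2, 2π/3]`, in the region
`{|Re τ| ≤ 1/2, Im τ > 2/5}` are among `z, -1/z, -1/(z+1), z/(z+1), -1/(z-1), -z/(z-1)`. -/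
theorem orbit_points_in_region (θ : ℝ) (hθ : θ ∈ Set.Icc (π / 2) (2 * π / 3))
    (a b c d : ℤ) (hdet : a * d - b * c = 1) (τ : ℂ)
    (hτ : τ = ((a : ℂ) * Complex.exp (I * θ) + b) / ((c : ℂ) * Complex.exp (I * θ) + d))
    (hre : |τ.re| ≤ 1 / 2) (him : 2 / 5 < τ.im) :
    τ = Complex.exp (I * θ) ∨
    τ = -1 / Complex.exp (I * θ) ∨
    τ = -1 / (Complex.exp (I * θ) + 1) ∨
    τ = Complex.exp (I * θ) / (Complex.exp (I * θ) + 1) ∨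
    τ = -1 / (Complex.exp (I * θ) - 1) ∨
    τ = -Complex.exp (I * θ) / (Complex.exp (I * θ) - 1) := by
  rw [mul_comm I] at hτ ⊢
  set z := Complex.exp (θ * I)
  have hz : normSq z = 1 := by rw [normSq_eq_norm_sq, norm_exp_ofReal_mul_I, one_pow]
  obtain ⟨hzre, hzre'⟩ : -1 / 2 ≤ z.re ∧ z.re ≤ 0 := by
    rw [exp_ofReal_mul_I_re]; exact cos_mem_Icc_of_mem_Icc hθ
  have hzim : z.im ≠ 0 := by
    rw [exp_ofReal_mul_I_im]
    exact (sin_pos_of_pos_of_lt_pi (by linarith [hθ.1, pi_pos]) (by linarith [hθ.2, pi_pos])).ne'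
  have hN := normSq_lt_of_lt_im_mobius hdet (by rw [exp_ofReal_mul_I_im]; exact sin_le_one θ)
    (hτ ▸ him)
  obtain ⟨n, h | h | h | h⟩ :=
    mobius_eq_of_normSq_lt hdet hz (abs_le.mpr ⟨by linarith, by linarith⟩) hzim hN
  · have := eq_or_eq_neg_inv_of_eq_add_int hz hzre hzre' (hτ.trans h) hre
    tauto
  · have := eq_or_eq_of_eq_int_sub_inv_sub_one hz hzim (hτ.trans h) hre
    tauto
  · have := eq_or_eq_neg_inv_of_eq_int_sub_inv hz hzre hzre' (hτ.trans h) hre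
    tauto
  · have := eq_or_eq_of_eq_int_sub_inv_add_one hz hzim (hτ.trans h) hre
    tauto
end
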